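/- Let X be an infinite set and let Y be any infinite set with |Y| ≤ 2^{|X|}. Then Top(X), with its subspace topology from 2^{P(X)}, contains a homeomorphic copy of the one-point compactification of the discrete space Y; that is, there is a topological embedding of OnePoint(Y) (Y taken with the discrete topology) into the subspace Top(X) of 2^{P(X)}. -/

import Mathlib

universe u

/-- The Cantor-cube topology on `Set (Set X)` (identifying `𝒫(𝒫(X))` with `2^{𝒫(X)}`):
the product topology, whose subbasic open sets are
`A⁺ = {x | A ∈ x}` and `A⁻ = {x | A ∉ x}` for `A ⊆ X`. -/
def cantorTop (X : Type*) : TopologicalSpace (Set (Set X)) :=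
  TopologicalSpace.generateFrom
    ({U | ∃ A : Set X, U = {x : Set (Set X) | A ∈ x}} ∪
     {U | ∃ A : Set X, U = {x : Set (Set X) | A ∉ x}})

/-- `τ` is a topology on `X`: it contains `∅` and `X` and is closed under
pairwise intersections and arbitrary unions. -/
def IsTopologyOn {X : Type*} (τ : Set (Set X)) : Prop :=
  ∅ ∈ τ ∧ Set.univ ∈ τ ∧ (∀ a ∈ τ, ∀ b ∈ τ, a ∩ b ∈ τ) ∧ ∀ S ⊆ τ, ⋃₀ S ∈ τ

/-- The one-point compactification of the type `D` taken with the discrete topology. -/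
def onePointDiscreteTop (D : Type*) : TopologicalSpace (OnePoint D) :=
  letI : TopologicalSpace D := ⊥
  inferInstance

open Set Topology OnePoint Function

/-!
Choose an injection `g` of `Y` into the subsets of `X` other than `∅` and `X` (possible since
`|Y| ≤ 2^|X|` and `X` is infinite), and send `y` to the three-element topology `{∅, X, g y}` and
`∞` to the indiscrete topology `{∅, X}`. For a fixed `A ⊆ X` the set of points whose image contains
`A` is everything or at most one point of `Y`, hence clopen in `OnePoint Y`; so the map is
continuous into the Cantor cube. It is injective, and a continuous injection of a compact space
into a Hausdorff space is an embedding.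
-/

lemma isTopologyOn_insert_empty_insert_univ {X : Type*} (a : Set X) :
    IsTopologyOn ({∅, univ, a} : Set (Set X)) := by
  refine ⟨by simp, by simp, ?_, fun S hS => ?_⟩
  · rintro b (rfl | rfl | rfl) c (rfl | rfl | rfl) <;> simp
  by_cases hu : univ ∈ S
  · simp [sUnion_eq_univ_iff.2 fun x => ⟨univ, hu, trivial⟩]
  by_cases ha : a ∈ S
  · refine Or.inr <| Or.inr <| (sUnion_subset fun b hb => ?_).antisymm (subset_sUnion_of_mem ha)
    rcases hS hb with rfl | rfl | rfl
    exacts [empty_subset _, absurd hb hu, subset_rfl]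
  · refine Or.inl <| sUnion_eq_empty.2 fun b hb => ?_
    rcases hS hb with rfl | rfl | rfl
    exacts [rfl, absurd hb hu, absurd hb ha]

lemma injOn_insert_empty_insert_univ {X : Type*} :
    InjOn (fun a : Set X => ({∅, univ, a} : Set (Set X))) {univ}ᶜ := by
  intro a ha b hb (hab : ({∅, univ, a} : Set (Set X)) = {∅, univ, b})
  have hb' : b ∈ ({∅, univ, a} : Set (Set X)) := by rw [hab]; simp
  have ha' : a ∈ ({∅, univ, b} : Set (Set X)) := by rw [← hab]; simp
  simp only [mem_compl_iff, mem_singleton_iff, mem_insert_iff] at ha hb ha' hb'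
  rcases ha' with rfl | rfl | rfl
  · rcases hb' with rfl | rfl | rfl <;> trivial
  · exact absurd rfl ha
  · rfl

lemma OnePoint.isClopen_of_finite_of_infty_notMem {Y : Type*} [TopologicalSpace Y]
    [DiscreteTopology Y] {s : Set (OnePoint Y)} (hs : s.Finite) (h : ∞ ∉ s) : IsClopen s :=
  ⟨hs.isClosed, (isOpen_iff_of_notMem h).2 (isOpen_discrete _)⟩

section CantorCube

attribute [local instance] cantorTop

variable {X : Type*}

lemma isOpen_setOf_mem_cantorTop (A : Set X) : IsOpen {x : Set (Set X) | A ∈ x} :=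
  TopologicalSpace.isOpen_generateFrom_of_mem (Or.inl ⟨A, rfl⟩)

lemma isOpen_setOf_notMem_cantorTop (A : Set X) : IsOpen {x : Set (Set X) | A ∉ x} :=
  TopologicalSpace.isOpen_generateFrom_of_mem (Or.inr ⟨A, rfl⟩)

instance t2Space_cantorTop : T2Space (Set (Set X)) := by
  refine ⟨fun x y hxy => ?_⟩
  obtain ⟨A, hA⟩ : ∃ A, ¬(A ∈ x ↔ A ∈ y) := by
    by_contra! h
    exact hxy (ext h)
  by_cases hx : A ∈ x
  · exact ⟨_, _, isOpen_setOf_mem_cantorTop A, isOpen_setOf_notMem_cantorTop A, hx,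
      fun hy => hA (iff_of_true hx hy), disjoint_left.2 fun _ h h' => h' h⟩
  · exact ⟨_, _, isOpen_setOf_notMem_cantorTop A, isOpen_setOf_mem_cantorTop A, hx,
      not_not.1 fun hy => hA (iff_of_false hx hy), disjoint_left.2 fun _ h h' => h h'⟩

lemma continuous_cantorTop_iff {Z : Type*} [TopologicalSpace Z] {F : Z → Set (Set X)} :
    Continuous F ↔ ∀ A, IsClopen {z | A ∈ F z} := by
  refine ⟨fun hF A => ⟨?_, (isOpen_setOf_mem_cantorTop A).preimage hF⟩, fun h => ?_⟩
  · exact isOpen_compl_iff.1 ((isOpen_setOf_notMem_cantorTop A).preimage hF)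
  · refine continuous_generateFrom_iff.2 ?_
    rintro _ (⟨A, rfl⟩ | ⟨A, rfl⟩)
    exacts [(h A).isOpen, (h A).compl.isOpen]

lemma isClosedEmbedding_insert_empty_insert_univ {Y : Type*} [TopologicalSpace Y]
    [DiscreteTopology Y] [Nonempty X] {g : Y → Set X} (hg : Injective g)
    (hg_nontriv : ∀ y, g y ∉ ({∅, univ} : Set (Set X))) :
    IsClosedEmbedding fun p : OnePoint Y =>
      (⟨{∅, univ, p.elim ∅ g}, isTopologyOn_insert_empty_insert_univ _⟩ :
        {τ : Set (Set X) | IsTopologyOn τ}) := by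
  set h : OnePoint Y → Set X := fun p => p.elim ∅ g
  have h_ne_univ : ∀ p, h p ≠ univ := by
    rintro (_ | y)
    exacts [empty_ne_univ, fun hy => hg_nontriv y (Or.inr hy)]
  have h_inj : Injective h := by
    rintro (_ | y) (_ | y') hyy'
    exacts [rfl, (hg_nontriv y' (Or.inl hyy'.symm)).elim, (hg_nontriv y (Or.inl hyy')).elim,
      by rw [hg hyy']]
  refine Continuous.isClosedEmbedding ?_ fun p q hpq =>
    h_inj (injOn_insert_empty_insert_univ (h_ne_univ p) (h_ne_univ q) (congrArg Subtype.val hpq))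
  refine continuous_induced_rng.2 (continuous_cantorTop_iff.2 fun A => ?_)
  change IsClopen {p | A ∈ ({∅, univ, h p} : Set (Set X))}
  by_cases hA : A ∈ ({∅, univ} : Set (Set X))
  · convert isClopen_univ
    exact eq_univ_of_forall fun p => mem_insert_iff.1 hA |>.imp_right Or.inl
  · have h_preimage : {p | A ∈ ({∅, univ, h p} : Set (Set X))} = h ⁻¹' {A} := by
      ext p
      simp only [mem_insert_iff, mem_singleton_iff, mem_ofPred_eq, mem_preimage] at hA ⊢
      tauto
    rw [h_preimage]
    refine OnePoint.isClopen_of_finite_of_infty_notMem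
      (subsingleton_singleton.preimage h_inj).finite fun hA' => hA (Or.inl hA'.symm)

end CantorCube

lemma exists_injective_notMem_empty_univ {X Y : Type u} [Infinite X]
    (hcard : Cardinal.mk Y ≤ 2 ^ Cardinal.mk X) :
    ∃ g : Y → Set X, Injective g ∧ ∀ y, g y ∉ ({∅, univ} : Set (Set X)) := by
  have : Cardinal.mk Y ≤ Cardinal.mk ↥(({∅, univ} : Set (Set X))ᶜ) := by
    rw [Cardinal.mk_compl_of_infinite, Cardinal.mk_set]
    · exact hcard
    · exact ((toFinite _).lt_aleph0).trans_le (Cardinal.aleph0_le_mk _)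
  obtain ⟨e⟩ := this
  exact ⟨fun y => e y, Subtype.val_injective.comp e.injective, fun y => (e y).2⟩

theorem stmt14_general {X Y : Type u} [Infinite X]
    (hcard : Cardinal.mk Y ≤ 2 ^ Cardinal.mk X) :
    ∃ f : OnePoint Y → ↥{τ : Set (Set X) | IsTopologyOn τ},
      @Topology.IsEmbedding _ _ (onePointDiscreteTop Y)
        (TopologicalSpace.induced Subtype.val (cantorTop X)) f := by
  let : TopologicalSpace Y := ⊥
  have : DiscreteTopology Y := ⟨rfl⟩
  let := cantorTop X
  obtain ⟨g, hg, hg_nontriv⟩ := exists_injective_notMem_empty_univ hcard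
  exact ⟨_, (isClosedEmbedding_insert_empty_insert_univ hg hg_nontriv).isEmbedding⟩

theorem stmt14 {X Y : Type u} [Infinite X] [Infinite Y]
    (hcard : Cardinal.mk Y ≤ 2 ^ Cardinal.mk X) :
    ∃ f : OnePoint Y → ↥{τ : Set (Set X) | IsTopologyOn τ},
      @Topology.IsEmbedding _ _ (onePointDiscreteTop Y)
        (TopologicalSpace.induced Subtype.val (cantorTop X)) f :=
  stmt14_general hcard
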